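/- Let n ≥ 8 be an even integer and let j, k be integers with 0 ≤ j < k and 2k+1 ≤ n/2. Then sin((2j+1)π/n)/sin((2k+1)π/n) is rational if and only if n = 12j+6 and k = 3j+1. -/

import Mathlib

/-!
Write `a = 2j + 1`, `b = 2k + 1` and `‖c‖` (`modDist n c`) for the distance from `c` to the
nearest multiple of `n`. A relation `sin (aπ/n) = q sin (bπ/n)` with `q` rational is a rational polynomial relation
satisfied by a primitive `2n`-th root of unity `ζ`, so it survives `ζ ↦ ζ ^ t` for every `t`
prime to `2n`. Taking absolute values gives `sin (‖ta‖π/n) = q sin (‖tb‖π/n)`, and since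
`0 < q < 1` this forces `‖ta‖ < ‖tb‖` for all such `t`. Choosing `t` with `‖tb‖` minimal, and
then `t` with `‖ta‖` maximal, shows that `2b = n`. Then `sin (‖tb‖π/n) = 1`, so `‖ta‖ = a` for all
`t`, which happens only for `n = 4a` (excluded: `sin (π/4)` is irrational) and `n = 6a`.
-/

open Real Polynomial

def modDist (n c : ℕ) : ℕ := min (c % n) (n - c % n)

theorem two_mul_modDist_le (n c : ℕ) : 2 * modDist n c ≤ n := by
  unfold modDist; omega

theorem modDist_mul_mul_right (m x d : ℕ) : modDist (m * d) (x * d) = modDist m x * d := by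
  unfold modDist
  rw [Nat.mul_mod_mul_right, ← Nat.sub_mul, min_mul_mul_right]

theorem modDist_eq_self {n c : ℕ} (h : 2 * c ≤ n) : modDist n c = c := by
  rcases Nat.eq_zero_or_pos c with rfl | hc
  · simp [modDist]
  · unfold modDist; rw [Nat.mod_eq_of_lt (by omega)]; omega

theorem Nat.ModEq.modDist_eq {n c c' : ℕ} (h : c ≡ c' [MOD n]) :
    modDist n c = modDist n c' := by
  unfold modDist; rw [h]

theorem dvd_modDist {k n c : ℕ} (hn : k ∣ n) (hc : k ∣ c) : k ∣ modDist n c := by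
  have : k ∣ c % n := (Nat.dvd_mod_iff hn).mpr hc
  unfold modDist
  rcases min_choice (c % n) (n - c % n) with h | h <;> rw [h]
  · exact this
  · exact Nat.dvd_sub hn this

theorem modDist_pos_of_odd {n c : ℕ} (hn : Even n) (hn0 : 0 < n) (hc : Odd c) :
    0 < modDist n c := by
  have hndvd : ¬n ∣ c := fun h =>
    Nat.not_even_iff_odd.mpr hc (even_iff_two_dvd.mpr (hn.two_dvd.trans h))
  have := Nat.mod_lt c hn0
  have := (Nat.dvd_iff_mod_eq_zero).not.mp hndvd
  unfold modDist; omega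

theorem strictMonoOn_sin_natCast_mul_pi_div (n : ℕ) :
    StrictMonoOn (fun u : ℕ => sin (u * π / n)) {u | 2 * u ≤ n} := by
  intro u hu v (hv : 2 * v ≤ n) huv
  have hn : (0 : ℝ) < n := by exact_mod_cast (show 0 < n by omega)
  have mem : ∀ w : ℕ, 2 * w ≤ n → (w : ℝ) * π / n ∈ Set.Icc (-(π / 2)) (π / 2) := by
    intro w hw
    have hw' : (w : ℝ) * 2 ≤ n := by exact_mod_cast (by omega : w * 2 ≤ n)
    constructor
    · linarith [pi_pos, show (0 : ℝ) ≤ w * π / n by positivity]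
    · rw [div_le_iff₀ hn]; nlinarith [pi_pos]
  exact strictMonoOn_sin (mem u hu) (mem v hv) (by gcongr)

theorem sin_natCast_mul_pi_div_pos {n v : ℕ} (hv : 2 * v ≤ n) (hv0 : 0 < v) :
    0 < sin (v * π / n) := by
  simpa using strictMonoOn_sin_natCast_mul_pi_div n (by simp) hv hv0

theorem abs_sin_natCast_mul_pi_div (n c : ℕ) :
    |sin (c * π / n)| = sin (modDist n c * π / n) := by
  rcases Nat.eq_zero_or_pos n with rfl | hn
  · simp
  have hnR : (0 : ℝ) < n := by exact_mod_cast hn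
  have hr := Nat.mod_lt c hn
  have hc : (c : ℝ) * π / n = (c % n : ℕ) * π / n + (c / n : ℕ) * π := by
    have : (c : ℝ) = (c % n : ℕ) + (c / n : ℕ) * n := by
      exact_mod_cast (Nat.mod_add_div' c n).symm
    rw [this]; field_simp
  have hnonneg : 0 ≤ sin ((c % n : ℕ) * π / n) := by
    apply sin_nonneg_of_nonneg_of_le_pi (by positivity)
    rw [div_le_iff₀ hnR]
    have : ((c % n : ℕ) : ℝ) ≤ n := by exact_mod_cast hr.le
    nlinarith [pi_pos]
  have hrefl : sin ((n - c % n : ℕ) * π / n) = sin ((c % n : ℕ) * π / n) := by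
    rw [Nat.cast_sub hr.le, ← sin_pi_sub]
    congr 1
    field_simp
    ring
  rw [hc, sin_add_nat_mul_pi, abs_mul, abs_pow, abs_neg, abs_one, one_pow, one_mul,
    abs_of_nonneg hnonneg, modDist]
  rcases min_choice (c % n) (n - c % n) with h | h <;> rw [h]
  exact hrefl.symm

theorem IsPrimitiveRoot.aeval_pow_eq_zero_of_coprime {K : Type*} [Field K] [CharZero K]
    {ζ : K} {N : ℕ} (hζ : IsPrimitiveRoot ζ N) (hN : 0 < N) {P : ℚ[X]} (hP : aeval ζ P = 0)
    {t : ℕ} (ht : t.Coprime N) : aeval (ζ ^ t) P = 0 := by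
  have hmin : minpoly ℚ (ζ ^ t) = minpoly ℚ ζ := by
    rw [← cyclotomic_eq_minpoly_rat (hζ.pow_of_coprime t ht) hN, cyclotomic_eq_minpoly_rat hζ hN]
  obtain ⟨S, rfl⟩ := minpoly.dvd ℚ ζ hP
  rw [map_mul, ← hmin, minpoly.aeval, zero_mul]

theorem Complex.exp_mul_I_sq_sub_one (x : ℝ) :
    Complex.exp (x * Complex.I) ^ 2 - 1 =
      2 * Complex.I * sin x * Complex.exp (x * Complex.I) := by
  rw [Complex.exp_mul_I]
  linear_combination Complex.sin_sq_add_cos_sq (x : ℂ) - Complex.sin x ^ 2 * Complex.I_sq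

theorem sin_natCast_mul_pi_div_eq_of_coprime {n a b t : ℕ} (hn : 0 < n) (q : ℚ)
    (h : sin (a * π / n) = q * sin (b * π / n)) (ht : t.Coprime (2 * n)) :
    sin ((t * a : ℕ) * π / n) = q * sin ((t * b : ℕ) * π / n) := by
  set z : ℂ := Complex.exp (π / n * Complex.I)
  have hz : IsPrimitiveRoot z (2 * n) := by
    convert Complex.isPrimitiveRoot_exp (2 * n) (by omega) using 2
    push_cast; field_simp
  have hpow : ∀ c : ℕ, z ^ c = Complex.exp ((c * π / n : ℝ) * Complex.I) := by
    intro c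
    rw [← Complex.exp_nat_mul]; push_cast; ring_nf
  -- At `X = z`, `X ^ (2 * c) - 1 = 2 i sin (c π / n) X ^ c`; this avoids negative powers of `z`.
  set P : ℚ[X] := (X ^ (2 * a) - 1) * X ^ b - C q * (X ^ (2 * b) - 1) * X ^ a
  have hP : ∀ c : ℕ, aeval (z ^ c) P = 2 * Complex.I * z ^ (c * a + c * b) *
      (sin ((c * a : ℕ) * π / n) - q * sin ((c * b : ℕ) * π / n) : ℝ) := by
    intro c
    simp only [P, map_sub, map_mul, map_pow, aeval_X, aeval_C, map_one, ← pow_mul, pow_add,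
      eq_ratCast]
    rw [show c * (2 * a) = c * a * 2 by ring, show c * (2 * b) = c * b * 2 by ring,
      pow_mul z (c * a), pow_mul z (c * b), hpow (c * a), hpow (c * b),
      Complex.exp_mul_I_sq_sub_one, Complex.exp_mul_I_sq_sub_one]
    push_cast; ring
  have hz0 : 2 * Complex.I * z ^ (t * a + t * b) ≠ 0 := by simp [z, Complex.exp_ne_zero]
  have h1 : aeval (z ^ 1) P = 0 := by rw [hP]; simp [h]
  have := hz.aeval_pow_eq_zero_of_coprime (by omega) (by rwa [pow_one] at h1) ht
  rw [hP, mul_eq_zero, or_iff_right hz0, Complex.ofReal_eq_zero, sub_eq_zero] at this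
  exact this

theorem sin_modDist_mul_eq_of_coprime {n a b t : ℕ} (hn : 0 < n) {q : ℚ} (hq : 0 ≤ q)
    (h : sin (a * π / n) = q * sin (b * π / n)) (ht : t.Coprime (2 * n)) :
    sin (modDist n (t * a) * π / n) = q * sin (modDist n (t * b) * π / n) := by
  rw [← abs_sin_natCast_mul_pi_div, ← abs_sin_natCast_mul_pi_div,
    sin_natCast_mul_pi_div_eq_of_coprime hn q h ht, abs_mul,
    abs_of_nonneg (by exact_mod_cast hq)]

theorem odd_of_coprime_two_mul {t n : ℕ} (ht : t.Coprime (2 * n)) : Odd t :=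
  (ht.coprime_dvd_right (dvd_mul_right 2 n)).odd_of_right

theorem Odd.exists_coprime_factorization {n a : ℕ} (ha : Odd a) (hn : Even n) :
    ∃ e a' s, Odd e ∧ a'.Coprime (2 * s) ∧ a = a' * e ∧ n = 2 * s * e := by
  obtain ⟨e, a', ℓ, -, hcop, rfl, hnℓ⟩ := Nat.exists_coprime' (Nat.gcd_pos_of_pos_left n ha.pos)
  have he : Odd e := ha.of_dvd_nat (dvd_mul_left e a')
  have hℓ : Even ℓ := (Nat.even_mul.mp (hnℓ ▸ hn)).resolve_right (Nat.not_even_iff_odd.mpr he)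
  obtain ⟨s, rfl⟩ := even_iff_two_dvd.mp hℓ
  exact ⟨e, a', s, he, hcop, rfl, hnℓ⟩

theorem exists_coprime_mul_modEq {N ℓ a u : ℕ} [NeZero N] (hℓ : ℓ ∣ N) (ha : a.Coprime ℓ)
    (hu : u.Coprime ℓ) : ∃ t, t.Coprime N ∧ t * a ≡ u [MOD ℓ] := by
  obtain ⟨T, hT⟩ := ZMod.unitsMap_surjective hℓ
    (ZMod.unitOfCoprime u hu * (ZMod.unitOfCoprime a ha)⁻¹)
  refine ⟨(T : ZMod N).val, ZMod.val_coe_unit_coprime T, ?_⟩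
  have hT' : (((T : ZMod N).val : ℕ) : ZMod ℓ) * a = u := by
    rw [ZMod.natCast_val, ← ZMod.castHom_apply (h := hℓ), ← MonoidHom.coe_coe,
      ← Units.coe_map, ← ZMod.unitsMap_def, hT, Units.val_mul, mul_assoc,
      ← ZMod.coe_unitOfCoprime a ha, Units.inv_mul, mul_one, ZMod.coe_unitOfCoprime]
  rw [← ZMod.natCast_eq_natCast_iff]
  push_cast
  exact hT'

theorem exists_coprime_modDist_mul_eq {N ℓ g a u : ℕ} [NeZero N] (hℓ : ℓ ∣ N)
    (ha : a.Coprime ℓ) (hu : u.Coprime ℓ) :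
    ∃ t, t.Coprime N ∧ modDist (ℓ * g) (t * (a * g)) = modDist ℓ u * g := by
  obtain ⟨t, ht, hta⟩ := exists_coprime_mul_modEq hℓ ha hu
  exact ⟨t, ht, by rw [← mul_assoc, modDist_mul_mul_right, hta.modDist_eq]⟩

-- `r - 1 - r % 2` is the largest odd number below `r`.
theorem coprime_sub_one_sub_mod_two {r : ℕ} (hr : 2 ≤ r) : (r - 1 - r % 2).Coprime (2 * r) := by
  have hodd : Odd (r - 1 - r % 2) := by rw [Nat.odd_iff]; omega
  rcases Nat.mod_two_eq_zero_or_one r with h | h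
  · rw [show 2 * r = 2 + 2 * (r - 1 - r % 2) by omega, Nat.coprime_add_mul_right_right]
    exact hodd.coprime_two_right
  · rw [show 2 * r = 2 ^ 2 + 2 * (r - 1 - r % 2) by omega, Nat.coprime_add_mul_right_right]
    exact hodd.coprime_two_right.pow_right 2

theorem modDist_le_of_coprime {r u : ℕ} (hr : 2 ≤ r) (hu : u.Coprime (2 * r)) :
    modDist (2 * r) u ≤ r - 1 - r % 2 := by
  have hodd : u % (2 * r) % 2 = 1 := by
    rw [Nat.mod_mod_of_dvd _ (dvd_mul_right 2 r), ← Nat.odd_iff]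
    exact odd_of_coprime_two_mul hu
  have hne : u % (2 * r) ≠ r := by
    intro h
    have hru : r ∣ u := by
      rw [← Nat.mod_add_div u (2 * r), h]
      exact (dvd_refl r).add ((dvd_mul_left r 2).mul_right _)
    have := Nat.dvd_one.mp (hu.gcd_eq_one ▸ Nat.dvd_gcd hru (dvd_mul_left r 2))
    omega
  have := Nat.mod_lt u (show 0 < 2 * r by omega)
  unfold modDist; omega

theorem sub_mul_lt_sub_mul {s s' e d c : ℕ} (hed : e < d) (hse : s * e = s' * d)
    (hc : 0 < c) (hcs : c ≤ s') : (s' - c) * d < (s - c) * e := by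
  have hcd := Nat.mul_lt_mul_of_pos_left hed hc
  have hcs' : c * d ≤ s' * d := Nat.mul_le_mul_right d hcs
  have : c * e ≤ s * e := by omega
  rw [Nat.sub_mul, Nat.sub_mul]
  omega

theorem lt_of_forall_modDist_lt {n e d a' b' s' : ℕ} (hn : Even n) (hn0 : 0 < n)
    (ha : Odd (a' * e)) (he : e ∣ n) (hnm : n = 2 * s' * d) (hb : b'.Coprime (2 * s'))
    (hlt : ∀ t, t.Coprime (2 * n) → modDist n (t * (a' * e)) < modDist n (t * (b' * d))) :
    e < d := by
  have : NeZero (2 * n) := ⟨by omega⟩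
  obtain ⟨t, ht, htb⟩ := exists_coprime_modDist_mul_eq (g := d)
    (dvd_mul_of_dvd_right (hnm ▸ dvd_mul_right _ d) 2) hb (Nat.coprime_one_left _)
  have hs' : 0 < s' := Nat.pos_of_ne_zero fun h => by simp [h] at hnm; omega
  rw [← hnm, modDist_eq_self (n := 2 * s') (c := 1) (by omega), one_mul] at htb
  have hpos := modDist_pos_of_odd hn hn0 ((odd_of_coprime_two_mul ht).mul ha)
  have hle : e ≤ modDist n (t * (a' * e)) :=
    Nat.le_of_dvd hpos (dvd_modDist he ((dvd_mul_left e a').mul_left t))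
  exact htb ▸ hle.trans_lt (hlt t ht)

theorem two_mul_eq_of_forall_modDist_lt {n a b : ℕ} (hn : Even n) (ha : Odd a) (hb : Odd b)
    (hbn : 2 * b ≤ n)
    (hlt : ∀ t, t.Coprime (2 * n) → modDist n (t * a) < modDist n (t * b)) : 2 * b = n := by
  obtain ⟨e, a', s, he, hcopa, rfl, hnℓ⟩ := ha.exists_coprime_factorization hn
  obtain ⟨d, b', s', hd, hcopb, rfl, hnm⟩ := hb.exists_coprime_factorization hn
  have hn0 : 0 < n := by have := hb.pos; omega
  have : NeZero (2 * n) := ⟨by omega⟩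
  have hed : e < d := lt_of_forall_modDist_lt hn hn0 ha (hnℓ ▸ dvd_mul_left e _) hnm hcopb hlt
  by_contra hne
  have hs' : 2 ≤ s' := by
    have : 2 * b' * d < 2 * s' * d := by rw [mul_assoc, ← hnm]; omega
    have := Nat.lt_of_mul_lt_mul_right this
    have := (Nat.odd_mul.mp hb).1.pos
    omega
  have hse : s * e = s' * d := by
    apply Nat.eq_of_mul_eq_mul_left two_pos
    rw [← mul_assoc, ← mul_assoc, ← hnℓ, hnm]
  have hs : s' < s := by
    by_contra! h
    nlinarith [Nat.mul_le_mul_right e h, Nat.mul_lt_mul_of_pos_left hed (show 0 < s' by omega)]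
  have hpar : s % 2 = s' % 2 := by
    have := congrArg (· % 2) hse
    simp only [Nat.mul_mod s, Nat.mul_mod s', Nat.odd_iff.mp he, Nat.odd_iff.mp hd] at this
    omega
  obtain ⟨t, ht, hta⟩ := exists_coprime_modDist_mul_eq (g := e)
    (dvd_mul_of_dvd_right (hnℓ ▸ dvd_mul_right _ e) 2) hcopa
    (coprime_sub_one_sub_mod_two (r := s) (by omega))
  rw [← hnℓ, modDist_eq_self (n := 2 * s) (by omega)] at hta
  have htb : modDist n (t * (b' * d)) ≤ (s' - 1 - s' % 2) * d := by
    rw [hnm, ← mul_assoc, modDist_mul_mul_right]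
    refine Nat.mul_le_mul_right d (modDist_le_of_coprime hs' (Nat.Coprime.mul_left ?_ hcopb))
    exact ht.coprime_dvd_right (dvd_mul_of_dvd_right (hnm ▸ dvd_mul_right _ d) 2)
  have key := (hlt t ht).trans_le htb
  rw [hta, hpar, Nat.sub_sub, Nat.sub_sub] at key
  exact (sub_mul_lt_sub_mul hed hse (by omega) (by omega)).not_gt key

theorem eq_four_mul_or_eq_six_mul_of_forall_modDist_eq {n a : ℕ} (hn : Even n) (ha : Odd a)
    (han : 2 * a < n) (h : ∀ t, t.Coprime (2 * n) → modDist n (t * a) = a) :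
    n = 4 * a ∨ n = 6 * a := by
  have : NeZero (2 * n) := ⟨by omega⟩
  obtain ⟨e, a', s, he, hcop, rfl, hn'⟩ := ha.exists_coprime_factorization hn
  have hdvd : 2 * s ∣ 2 * n := dvd_mul_of_dvd_right (hn' ▸ dvd_mul_right _ e) 2
  have hs : 0 < s := Nat.pos_of_ne_zero fun h => by simp [h] at hn'; omega
  obtain ⟨t, ht, h1⟩ := exists_coprime_modDist_mul_eq (g := e) hdvd hcop (Nat.coprime_one_left _)
  rw [← hn', h t ht, modDist_eq_self (n := 2 * s) (c := 1) (by omega)] at h1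
  obtain rfl : a' = 1 := Nat.eq_of_mul_eq_mul_right he.pos h1
  have hs2 : 2 ≤ s := by
    by_contra!
    interval_cases s; omega
  obtain ⟨t, ht, h2⟩ := exists_coprime_modDist_mul_eq (g := e) hdvd hcop
    (coprime_sub_one_sub_mod_two hs2)
  rw [← hn', h t ht, modDist_eq_self (n := 2 * s) (by omega)] at h2
  have := Nat.eq_of_mul_eq_mul_right he.pos h2
  obtain rfl | rfl : s = 2 ∨ s = 3 := by omega
  all_goals omega

theorem modDist_lt_of_sin_eq_mul {n u v : ℕ} (hn : Even n) (hn0 : 0 < n) (hv : Odd v) {q : ℝ}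
    (hq : q < 1) (h : sin (modDist n u * π / n) = q * sin (modDist n v * π / n)) :
    modDist n u < modDist n v := by
  have hpos := sin_natCast_mul_pi_div_pos (two_mul_modDist_le n v) (modDist_pos_of_odd hn hn0 hv)
  refine ((strictMonoOn_sin_natCast_mul_pi_div n).lt_iff_lt (two_mul_modDist_le ..)
    (two_mul_modDist_le ..)).mp ?_
  simp only [h]
  exact mul_lt_of_lt_one_left hpos hq

theorem irrational_sin_pi_div_four : Irrational (sin (π / 4)) := by
  rw [sin_pi_div_four]
  exact irrational_sqrt_two.div_natCast two_ne_zero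

theorem eq_six_mul_of_sin_eq_ratCast_mul {n a b : ℕ} (hn : Even n) (ha : Odd a) (hb : Odd b)
    (hab : a < b) (hbn : 2 * b ≤ n) {q : ℚ} (h : sin (a * π / n) = q * sin (b * π / n)) :
    n = 6 * a ∧ 2 * b = n := by
  have hn0 : 0 < n := by have := hb.pos; omega
  have hmono := strictMonoOn_sin_natCast_mul_pi_div n
  have hsinb : 0 < sin (b * π / n) := sin_natCast_mul_pi_div_pos hbn hb.pos
  have hsina : sin (a * π / n) < sin (b * π / n) := hmono (show 2 * a ≤ n by omega) hbn hab
  have hq0 : 0 < q := by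
    have := h ▸ sin_natCast_mul_pi_div_pos (by omega : 2 * a ≤ n) ha.pos
    exact_mod_cast (mul_pos_iff_of_pos_right hsinb).mp this
  have hq1 : (q : ℝ) < 1 := (mul_lt_iff_lt_one_left hsinb).mp (h ▸ hsina)
  have hrel (t : ℕ) (ht : t.Coprime (2 * n)) := sin_modDist_mul_eq_of_coprime hn0 hq0.le h ht
  have hbn' := two_mul_eq_of_forall_modDist_lt hn ha hb hbn fun t ht =>
    modDist_lt_of_sin_eq_mul hn hn0 ((odd_of_coprime_two_mul ht).mul hb) hq1 (hrel t ht)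
  have hsin1 : sin (b * π / n) = 1 := by
    rw [← hbn', Nat.cast_mul, Nat.cast_two, ← sin_pi_div_two]
    have : (b : ℝ) ≠ 0 := by exact_mod_cast hb.pos.ne'
    congr 1
    field_simp
  have hconst (t : ℕ) (ht : t.Coprime (2 * n)) : modDist n (t * a) = a := by
    have hb1 : modDist n (t * b) = b := by
      rw [← hbn', modDist_mul_mul_right,
        Nat.ModEq.modDist_eq (n := 2) (c' := 1) (Nat.odd_iff.mp (odd_of_coprime_two_mul ht)),
        modDist_eq_self (n := 2) (c := 1) (by norm_num), one_mul]
    refine hmono.injOn (two_mul_modDist_le ..) (show 2 * a ≤ n by omega) ?_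
    simp only [hrel t ht, hb1, hsin1, h, mul_one]
  refine ⟨(eq_four_mul_or_eq_six_mul_of_forall_modDist_eq hn ha (by omega) hconst).resolve_left
    fun h4 => ?_, hbn'⟩
  have ha0 : (a : ℝ) ≠ 0 := by exact_mod_cast ha.pos.ne'
  rw [hsin1, mul_one, h4, Nat.cast_mul, Nat.cast_ofNat,
    show (a : ℝ) * π / (4 * a) = π / 4 by field_simp] at h
  exact irrational_sin_pi_div_four.ne_rat q h

theorem sine_ratio_rational_iff_even_first_general (n : ℕ) (heven : Even n)
    (j k : ℕ) (hjk : j < k) (hk : 2 * k + 1 ≤ n / 2) :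
    (Real.sin ((2 * j + 1) * Real.pi / n) / Real.sin ((2 * k + 1) * Real.pi / n)) ∈
        Set.range ((↑) : ℚ → ℝ) ↔
      (n = 12 * j + 6 ∧ k = 3 * j + 1) := by
  have hodd (i : ℕ) : (2 * i + 1 : ℝ) = ((2 * i + 1 : ℕ) : ℝ) := by push_cast; ring
  rw [hodd j, hodd k]
  constructor
  · rintro ⟨q, hq⟩
    have hsin : sin ((2 * k + 1 : ℕ) * π / n) ≠ 0 :=
      (sin_natCast_mul_pi_div_pos (by omega) (by omega)).ne'
    have := eq_six_mul_of_sin_eq_ratCast_mul heven (odd_two_mul_add_one j)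
      (odd_two_mul_add_one k) (by omega) (by omega) (q := q) (by rw [hq, div_mul_cancel₀ _ hsin])
    omega
  · rintro ⟨rfl, rfl⟩
    have hj : (2 * j + 1 : ℝ) ≠ 0 := by positivity
    have h6 : ((2 * j + 1 : ℕ) : ℝ) * π / ((12 * j + 6 : ℕ) : ℝ) = π / 6 := by
      push_cast; field_simp; ring
    have h2 : ((2 * (3 * j + 1) + 1 : ℕ) : ℝ) * π / ((12 * j + 6 : ℕ) : ℝ) = π / 2 := by
      push_cast; field_simp; ring
    exact ⟨1 / 2, by rw [h6, h2, sin_pi_div_six, sin_pi_div_two]; norm_num⟩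

/-- For even `n ≥ 8` and integers `0 ≤ j < k` with `2k+1 ≤ n/2`, the ratio
`sin((2j+1)π/n)/sin((2k+1)π/n)` is rational if and only if `n = 12j+6` and `k = 3j+1`. -/
theorem sine_ratio_rational_iff_even_first (n : ℕ) (hn : 8 ≤ n) (heven : Even n)
    (j k : ℕ) (hjk : j < k) (hk : 2 * k + 1 ≤ n / 2) :
    (Real.sin ((2 * j + 1) * Real.pi / n) / Real.sin ((2 * k + 1) * Real.pi / n)) ∈
        Set.range ((↑) : ℚ → ℝ) ↔
      (n = 12 * j + 6 ∧ k = 3 * j + 1) :=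
  sine_ratio_rational_iff_even_first_general n heven j k hjk hk
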